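/- arXiv:2404.16131 — 14 statements merged into one kernel-verified Lean document; each statement's English description precedes it below -/
import Mathlib

section
/- Let E_W ⊆ E be an STC labeling of G and set Ĝ = (V, E ∖ E_W). Then for every subset V' ⊆ V and every vertex k ∈ V', the set C_k = {k} ∪ { i ∈ V' : {i,k} ∈ E ∖ E_W } is a clique in G. -/
open scoped Classical

namespace CD

variable {V : Type*}

/-- An open wedge, encoded as a pair `(p, k)` where `p = s(i,j)` is the unordered pair of
endpoint vertices and `k` is the center: `{i,k}` and `{j,k}` are edges and `{i,j}` is not.
Using an unordered pair identifies the wedges `(i,j,k)` and `(j,i,k)`. -/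
def IsOpenWedge (G : SimpleGraph V) (w : Sym2 V × V) : Prop :=
  ∃ i j : V, w.1 = s(i, j) ∧ i ≠ j ∧ G.Adj i w.2 ∧ G.Adj j w.2 ∧ ¬ G.Adj i j

/-- The two edges of a wedge `(s(i,j), k)`, namely `s(i,k)` and `s(j,k)`. -/
def wedgeEdges (w : Sym2 V × V) : Set (Sym2 V) :=
  {e | ∃ x ∈ w.1, e = s(x, w.2)}

/-- The set of open wedges of `G`. -/
def wedgeSet (G : SimpleGraph V) : Set (Sym2 V × V) := {w | IsOpenWedge G w}

/-- `E_W ⊆ E` is an STC labeling if every open wedge has one of its two edges in `E_W`. -/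
def IsSTCLabeling (G : SimpleGraph V) (EW : Set (Sym2 V)) : Prop :=
  EW ⊆ G.edgeSet ∧
  ∀ i j k : V, i ≠ j → G.Adj i k → G.Adj j k → ¬ G.Adj i j →
    s(i, k) ∈ EW ∨ s(j, k) ∈ EW

/-- Minimum size of an STC labeling of `G`. -/
noncomputable def MinSTC (G : SimpleGraph V) : ℕ :=
  sInf {c | ∃ EW : Set (Sym2 V), IsSTCLabeling G EW ∧ EW.ncard = c}

variable [Fintype V] [DecidableEq V]

/-- A clique partition: a partition of the vertex set all of whose parts are cliques in `G`. -/
def IsCliquePartition (G : SimpleGraph V) (C : Finpartition (Finset.univ : Finset V)) : Prop :=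
  ∀ P ∈ C.parts, G.IsClique (P : Set V)

/-- An edge crosses the partition iff no part contains both of its endpoints
(equivalently, its endpoints lie in different parts). -/
def Crosses (C : Finpartition (Finset.univ : Finset V)) (e : Sym2 V) : Prop :=
  ¬ ∃ P ∈ C.parts, ∀ x ∈ e, x ∈ P

/-- The cost of a partition: the number of edges of `G` crossing it. -/
noncomputable def cost (G : SimpleGraph V) (C : Finpartition (Finset.univ : Finset V)) : ℕ :=
  {e | e ∈ G.edgeSet ∧ Crosses C e}.ncard

/-- Optimal cluster deletion value: the minimum cost of a clique partition of `G`. -/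
noncomputable def OPTCD (G : SimpleGraph V) : ℕ :=
  sInf {c | ∃ C : Finpartition (Finset.univ : Finset V), IsCliquePartition G C ∧ cost G C = c}

/-- `B_k(G)`: edges `{i,j} ∈ E` with `i, j ≠ k`, `{i,k} ∈ E` and `{j,k} ∉ E`. -/
def Bset (G : SimpleGraph V) (k : V) : Set (Sym2 V) :=
  {e | ∃ i j : V, e = s(i, j) ∧ G.Adj i j ∧ j ≠ k ∧ G.Adj i k ∧ ¬ G.Adj j k}

/-- `N_k(G)`: unordered pairs `{i,j}` of distinct vertices with `{i,k}, {j,k} ∈ E`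
and `{i,j} ∉ E`. -/
def Nset (G : SimpleGraph V) (k : V) : Set (Sym2 V) :=
  {e | ∃ i j : V, e = s(i, j) ∧ i ≠ j ∧ ¬ G.Adj i j ∧ G.Adj i k ∧ G.Adj j k}

/-- Feasibility for the STC LP relaxation: variables are nonnegative on edges and for every
open wedge `(i,j,k)` centered at `k` we have `x_{ik} + x_{jk} ≥ 1`. -/
def LPFeasible (G : SimpleGraph V) (x : Sym2 V → ℚ) : Prop :=
  (∀ e ∈ G.edgeSet, 0 ≤ x e) ∧
  ∀ i j k : V, i ≠ j → G.Adj i k → G.Adj j k → ¬ G.Adj i j →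
    1 ≤ x s(i, k) + x s(j, k)

/-- A solution is half-integral if every edge variable lies in `{0, 1/2, 1}`. -/
def HalfIntegral (G : SimpleGraph V) (x : Sym2 V → ℚ) : Prop :=
  ∀ e ∈ G.edgeSet, x e = 0 ∨ x e = 1 / 2 ∨ x e = 1

/-- Feasibility for the program (IP2): binary variables `y_e, z_e` on edges, and for every
open wedge `(i,j,k)` centered at `k`, `z_{ik} ≤ y_{jk}` and `z_{jk} ≤ y_{ik}`. -/
def IP2Feasible (G : SimpleGraph V) (y z : Sym2 V → ℚ) : Prop :=
  (∀ e ∈ G.edgeSet, (y e = 0 ∨ y e = 1) ∧ (z e = 0 ∨ z e = 1)) ∧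
  ∀ i j k : V, i ≠ j → G.Adj i k → G.Adj j k → ¬ G.Adj i j →
    z s(i, k) ≤ y s(j, k) ∧ z s(j, k) ≤ y s(i, k)

theorem statement_0 (G : SimpleGraph V) (EW : Set (Sym2 V)) (hEW : IsSTCLabeling G EW)
    (V' : Set V) (k : V) (hk : k ∈ V') :
    G.IsClique ({k} ∪ {i | i ∈ V' ∧ s(i, k) ∈ G.edgeSet \ EW}) := by
  intro a ha b hb hab
  have key : ∀ x, x ∈ ({k} ∪ {i | i ∈ V' ∧ s(i, k) ∈ G.edgeSet \ EW} : Set V) →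
      x ≠ k → G.Adj x k ∧ s(x, k) ∉ EW := by
    intro x hx hxk
    rcases hx with h | h
    · exact absurd h hxk
    · exact ⟨(SimpleGraph.mem_edgeSet G).mp h.2.1, h.2.2⟩
  by_cases hak : a = k
  · have hbk : b ≠ k := fun h => hab (hak.trans h.symm)
    rw [hak]
    exact ((key b hb hbk).1).symm
  · by_cases hbk : b = k
    · rw [hbk]
      exact (key a ha (fun h => hab (h.trans hbk.symm))).1
    · obtain ⟨hadj_a, hna⟩ := key a ha hak
      obtain ⟨hadj_b, hnb⟩ := key b hb hbk
      by_contra hnadj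
      rcases hEW.2 a b k hab hadj_a hadj_b hnadj with h | h
      · exact hna h
      · exact hnb h

end CD
end

section
/- Let G' = (V', E') be a finite simple graph and let k ∈ V' satisfy deg_k(G') ≥ deg_u(G') for every u ∈ V'. Then |B_k(G')| ≤ 2·|N_k(G')|. -/
/-!
Orient each element of `B_k` as `(i, j)` with `i ~ k` and `j ≁ k`; the orientation is unique, so
`|B_k|` is the sum over `i ~ k` of the number of such `j`, namely `|N[i] \ N[k]|` (closed
neighbourhoods). The pairs in `N_k` are the edges of the complement of the link of `k`, whose
degree at `i ~ k` is `|N[k] \ N[i]|`, so `2 |N_k|` is the sum of these. Finally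
`|N[i] \ N[k]| ≤ |N[k] \ N[i]|` because `|N[i]| = deg i + 1 ≤ deg k + 1 = |N[k]|`.
-/

open scoped Classical

namespace CD

open Finset

variable {V : Type*}

@[simps]
def linkCompl (G : SimpleGraph V) (k : V) : SimpleGraph V where
  Adj i j := Gᶜ.Adj i j ∧ G.Adj i k ∧ G.Adj j k
  symm := ⟨fun _ _ h => ⟨h.1.symm, h.2.2, h.2.1⟩⟩
  loopless := ⟨fun _ h => h.1.ne rfl⟩

lemma Nset_eq_edgeSet_linkCompl (G : SimpleGraph V) (k : V) :
    Nset G k = (linkCompl G k).edgeSet := by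
  ext e
  induction e using Sym2.ind with
  | _ a b =>
    constructor
    · rintro ⟨i, j, hij, hne, hnadj, hik, hjk⟩
      rw [hij, SimpleGraph.mem_edgeSet, linkCompl_adj]
      exact ⟨(SimpleGraph.compl_adj G i j).2 ⟨hne, hnadj⟩, hik, hjk⟩
    · rw [SimpleGraph.mem_edgeSet, linkCompl_adj]
      rintro ⟨hab, hak, hbk⟩
      obtain ⟨hne, hnadj⟩ := (SimpleGraph.compl_adj G a b).1 hab
      exact ⟨a, b, rfl, hne, hnadj, hak, hbk⟩

variable [Fintype V]

lemma two_mul_ncard_Nset (G : SimpleGraph V) (k : V) :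
    2 * (Nset G k).ncard = ∑ i, (linkCompl G k).degree i := by
  rw [SimpleGraph.sum_degrees_eq_twice_card_edges, Nset_eq_edgeSet_linkCompl,
    ← SimpleGraph.coe_edgeFinset, Set.ncard_coe_finset]

variable [DecidableEq V]

noncomputable def bFiber (G : SimpleGraph V) (k i : V) : Finset V :=
  univ.filter fun j => G.Adj i j ∧ j ≠ k ∧ G.Adj i k ∧ ¬ G.Adj j k

lemma ncard_Bset_eq_sum_card_bFiber (G : SimpleGraph V) (k : V) :
    (Bset G k).ncard = ∑ i, #(bFiber G k i) := by
  have hB : Bset G k = ↑((univ.sigma (bFiber G k)).image fun x => s(x.1, x.2)) := by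
    ext e
    simp only [Bset, bFiber, coe_image, Set.mem_ofPred_eq, Set.mem_image, mem_coe, mem_sigma,
      mem_univ, mem_filter, true_and, Sigma.exists]
    constructor
    · rintro ⟨i, j, rfl, h⟩
      exact ⟨i, j, h, rfl⟩
    · rintro ⟨i, j, h, rfl⟩
      exact ⟨i, j, rfl, h⟩
  rw [hB, Set.ncard_coe_finset, card_image_of_injOn, card_sigma]
  -- the endpoint adjacent to `k` fixes the orientation of an element of `B_k(G)`
  rintro ⟨a, b⟩ hab ⟨c, d⟩ hcd h
  simp only [bFiber, mem_coe, mem_sigma, mem_univ, mem_filter, true_and] at hab hcd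
  rcases Sym2.eq_iff.1 h with ⟨rfl, rfl⟩ | ⟨rfl, rfl⟩
  · rfl
  · exact absurd hab.2.2.1 hcd.2.2.2

lemma card_insert_neighborFinset (G : SimpleGraph V) (v : V) :
    #(insert v (G.neighborFinset v)) = G.degree v + 1 :=
  card_insert_of_notMem (G.notMem_neighborFinset_self v)

lemma bFiber_eq_sdiff {G : SimpleGraph V} {k i : V} (hik : G.Adj i k) :
    bFiber G k i = insert i (G.neighborFinset i) \ insert k (G.neighborFinset k) := by
  ext j
  simp only [bFiber, mem_filter, mem_univ, true_and, mem_sdiff, mem_insert,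
    SimpleGraph.mem_neighborFinset]
  constructor
  · rintro ⟨hij, hjk, -, hnjk⟩
    exact ⟨Or.inr hij, by rintro (rfl | hkj); exacts [hjk rfl, hnjk hkj.symm]⟩
  · rintro ⟨rfl | hij, hnot⟩
    · exact absurd (Or.inr hik.symm) hnot
    · exact ⟨hij, fun h => hnot (Or.inl h), hik, fun h => hnot (Or.inr h.symm)⟩

lemma neighborFinset_linkCompl_eq_sdiff {G : SimpleGraph V} {k i : V} (hik : G.Adj i k) :
    (linkCompl G k).neighborFinset i =
      insert k (G.neighborFinset k) \ insert i (G.neighborFinset i) := by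
  ext j
  simp only [SimpleGraph.mem_neighborFinset, linkCompl_adj, SimpleGraph.compl_adj, mem_sdiff,
    mem_insert]
  constructor
  · rintro ⟨⟨hne, hnij⟩, -, hjk⟩
    exact ⟨Or.inr hjk.symm, by rintro (rfl | hij); exacts [hne rfl, hnij hij]⟩
  · rintro ⟨rfl | hkj, hnot⟩
    · exact absurd (Or.inr hik) hnot
    · exact ⟨⟨fun h => hnot (Or.inl h.symm), fun h => hnot (Or.inr h)⟩, hik, hkj.symm⟩

lemma card_bFiber_le_degree_linkCompl {G : SimpleGraph V} {k i : V}
    (hdeg : G.degree i ≤ G.degree k) : #(bFiber G k i) ≤ (linkCompl G k).degree i := by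
  by_cases hik : G.Adj i k
  · rw [bFiber_eq_sdiff hik, ← SimpleGraph.card_neighborFinset_eq_degree,
      neighborFinset_linkCompl_eq_sdiff hik, card_sdiff_le_card_sdiff_iff,
      card_insert_neighborFinset, card_insert_neighborFinset]
    omega
  · have : bFiber G k i = ∅ := filter_eq_empty_iff.2 fun _ _ h => hik h.2.2.1
    simp [this]

theorem statement_1 (G' : SimpleGraph V) (k : V)
    (hdeg : ∀ u : V, G'.degree u ≤ G'.degree k) :
    (Bset G' k).ncard ≤ 2 * (Nset G' k).ncard := by
  rw [ncard_Bset_eq_sum_card_bFiber, two_mul_ncard_Nset]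
  exact sum_le_sum fun i _ => card_bFiber_le_degree_linkCompl (hdeg i)

end CD
end

section
/- Every finite simple graph G' = (V', E') with V' nonempty contains a vertex k with |B_k(G')| ≤ 2·|N_k(G')|. -/
open scoped Classical

namespace CD

variable {V : Type*}

variable [Fintype V] [DecidableEq V]

lemma card_filter_prod_eq_sum {α β : Type*} [Fintype α] [Fintype β]
    (p : α → β → Prop) [∀ a b, Decidable (p a b)] :
    ((Finset.univ : Finset (α × β)).filter fun t => p t.1 t.2).card
      = ∑ a : α, ((Finset.univ : Finset β).filter (p a)).card := by
  simp only [Finset.card_filter, Fintype.sum_prod_type]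

theorem statement_3 [Nonempty V] (G' : SimpleGraph V) :
    ∃ k : V, (Bset G' k).ncard ≤ 2 * (Nset G' k).ncard := by
  classical
  set b : V → ℕ := fun k =>
    ((Finset.univ : Finset (V × V)).filter fun p =>
      G'.Adj p.1 p.2 ∧ p.2 ≠ k ∧ G'.Adj p.1 k ∧ ¬ G'.Adj p.2 k).card with hb
  set n : V → ℕ := fun i =>
    ((Finset.univ : Finset (V × V)).filter fun p =>
      p.1 ≠ p.2 ∧ ¬ G'.Adj p.1 p.2 ∧ G'.Adj p.1 i ∧ G'.Adj p.2 i).card with hn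
  -- (1) ncard (Bset G' k) ≤ b k
  have hB : ∀ k, (Bset G' k).ncard ≤ b k := by
    intro k
    have hsub : Bset G' k ⊆
        ↑(((Finset.univ : Finset (V × V)).filter fun p =>
          G'.Adj p.1 p.2 ∧ p.2 ≠ k ∧ G'.Adj p.1 k ∧ ¬ G'.Adj p.2 k).image
          (fun p => s(p.1, p.2))) := by
      rintro e ⟨i, j, rfl, h1, h2, h3, h4⟩
      simp only [Finset.coe_image, Set.mem_image, Finset.mem_coe, Finset.mem_filter,
        Finset.mem_univ, true_and]
      exact ⟨(i, j), ⟨h1, h2, h3, h4⟩, rfl⟩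
    calc (Bset G' k).ncard ≤ _ := Set.ncard_le_ncard hsub (Finset.finite_toSet _)
      _ ≤ b k := by
        rw [Set.ncard_coe_finset]
        exact Finset.card_image_le
  -- (2) n i ≤ 2 * ncard (Nset G' i)
  have hN : ∀ i, n i ≤ 2 * (Nset G' i).ncard := by
    intro i
    set s := ((Finset.univ : Finset (V × V)).filter fun p =>
      p.1 ≠ p.2 ∧ ¬ G'.Adj p.1 p.2 ∧ G'.Adj p.1 i ∧ G'.Adj p.2 i) with hs
    have h1 : s.card ≤ 2 * (s.image (fun p => s(p.1, p.2))).card := by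
      apply Finset.card_le_mul_card_image
      intro a _
      obtain ⟨j, k⟩ := a
      have : (s.filter fun x => s(x.1, x.2) = s(j, k)) ⊆ {(j, k), (k, j)} := by
        intro p hp
        simp only [Finset.mem_filter] at hp
        rcases Sym2.eq_iff.mp hp.2 with ⟨h, h'⟩ | ⟨h, h'⟩
        · simp [Prod.ext_iff, h, h']
        · simp [Prod.ext_iff, h, h']
      calc _ ≤ ({(j, k), (k, j)} : Finset (V × V)).card := Finset.card_le_card this
        _ ≤ 2 := Finset.card_insert_le _ _ |>.trans (by simp)
    have h2 : (s.image (fun p => s(p.1, p.2))).card ≤ (Nset G' i).ncard := by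
      rw [← Set.ncard_coe_finset]
      apply Set.ncard_le_ncard _ (Set.toFinite _)
      intro e he
      simp only [Finset.coe_image, Set.mem_image, Finset.mem_coe, hs, Finset.mem_filter,
        Finset.mem_univ, true_and] at he
      obtain ⟨⟨j, k⟩, ⟨hjk, hnadj, hji, hki⟩, rfl⟩ := he
      exact ⟨j, k, rfl, hjk, hnadj, hji, hki⟩
    calc n i = s.card := rfl
      _ ≤ 2 * (s.image (fun p => s(p.1, p.2))).card := h1
      _ ≤ 2 * (Nset G' i).ncard := by omega
  -- (3) ∑ b = ∑ n
  have hsum : ∑ k : V, b k = ∑ i : V, n i := by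
    have hb' : ∑ k : V, b k =
        ((Finset.univ : Finset (V × (V × V))).filter fun t =>
          G'.Adj t.2.1 t.2.2 ∧ t.2.2 ≠ t.1 ∧ G'.Adj t.2.1 t.1 ∧ ¬ G'.Adj t.2.2 t.1).card := by
      rw [card_filter_prod_eq_sum
        (fun k (p : V × V) => G'.Adj p.1 p.2 ∧ p.2 ≠ k ∧ G'.Adj p.1 k ∧ ¬ G'.Adj p.2 k)]
    have hn' : ∑ i : V, n i =
        ((Finset.univ : Finset (V × (V × V))).filter fun t =>
          t.2.1 ≠ t.2.2 ∧ ¬ G'.Adj t.2.1 t.2.2 ∧ G'.Adj t.2.1 t.1 ∧ G'.Adj t.2.2 t.1).card := by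
      rw [card_filter_prod_eq_sum
        (fun i (p : V × V) => p.1 ≠ p.2 ∧ ¬ G'.Adj p.1 p.2 ∧ G'.Adj p.1 i ∧ G'.Adj p.2 i)]
    rw [hb', hn']
    refine Finset.card_bij' (fun t _ => (t.2.1, t.2.2, t.1)) (fun t _ => (t.2.2, t.1, t.2.1))
      ?_ ?_ ?_ ?_
    · rintro ⟨k, i, j⟩ ht
      simp only [Finset.mem_filter, Finset.mem_univ, true_and] at ht ⊢
      exact ⟨ht.2.1, ht.2.2.2, G'.adj_symm ht.1, G'.adj_symm ht.2.2.1⟩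
    · rintro ⟨i, j, k⟩ ht
      simp only [Finset.mem_filter, Finset.mem_univ, true_and] at ht ⊢
      exact ⟨G'.adj_symm ht.2.2.1, ht.1, G'.adj_symm ht.2.2.2, ht.2.1⟩
    · rintro ⟨k, i, j⟩ _; rfl
    · rintro ⟨i, j, k⟩ _; rfl
  -- pigeonhole
  have htotal : ∑ k : V, (Bset G' k).ncard ≤ ∑ k : V, 2 * (Nset G' k).ncard := by
    calc ∑ k : V, (Bset G' k).ncard ≤ ∑ k : V, b k := Finset.sum_le_sum fun k _ => hB k
      _ = ∑ i : V, n i := hsum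
      _ ≤ ∑ k : V, 2 * (Nset G' k).ncard := Finset.sum_le_sum fun k _ => hN k
  obtain ⟨k, _, hk⟩ := Finset.exists_le_of_sum_le Finset.univ_nonempty htotal
  exact ⟨k, hk⟩

end CD
end

section
/- If W is an edge-disjoint set of open wedges of G and C is a clique partition of G, then the cost of C is at least |W|; in particular |W| ≤ OPT_CD(G). -/
open scoped Classical

namespace CD

variable {V : Type*}

variable [Fintype V] [DecidableEq V]

lemma wedge_has_crossing_edge (G : SimpleGraph V) [Fintype V] [DecidableEq V]
    (C : Finpartition (Finset.univ : Finset V))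
    (hC : IsCliquePartition G C) (w : Sym2 V × V) (hw : IsOpenWedge G w) :
    ∃ e ∈ wedgeEdges w, e ∈ G.edgeSet ∧ Crosses C e := by
  obtain ⟨i, j, h1, hij, hik, hjk, hnij⟩ := hw
  by_contra h
  push_neg at h
  have hi : s(i, w.2) ∈ wedgeEdges w := ⟨i, by rw [h1]; simp, rfl⟩
  have hj : s(j, w.2) ∈ wedgeEdges w := ⟨j, by rw [h1]; simp, rfl⟩
  have hci : ¬ Crosses C s(i, w.2) := h _ hi hik
  have hcj : ¬ Crosses C s(j, w.2) := h _ hj hjk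
  rw [Crosses, not_not] at hci hcj
  obtain ⟨P, hP, hPmem⟩ := hci
  obtain ⟨Q, hQ, hQmem⟩ := hcj
  have hkP : w.2 ∈ P := hPmem w.2 (by simp)
  have hkQ : w.2 ∈ Q := hQmem w.2 (by simp)
  have hPQ : P = Q := C.eq_of_mem_parts hP hQ hkP hkQ
  have hiP : i ∈ P := hPmem i (by simp)
  have hjP : j ∈ P := hPQ ▸ hQmem j (by simp)
  exact hnij (hC P hP hiP hjP hij)

theorem statement_4 (G : SimpleGraph V) (W : Set (Sym2 V × V))
    (hW : ∀ w ∈ W, IsOpenWedge G w)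
    (hdisj : W.Pairwise fun w₁ w₂ => Disjoint (wedgeEdges w₁) (wedgeEdges w₂))
    (C : Finpartition (Finset.univ : Finset V)) (hC : IsCliquePartition G C) :
    W.ncard ≤ cost G C ∧ W.ncard ≤ OPTCD G := by
  have main : ∀ C' : Finpartition (Finset.univ : Finset V), IsCliquePartition G C' →
      W.ncard ≤ cost G C' := by
    intro C' hC'
    have hch : ∀ w ∈ W, ∃ e ∈ wedgeEdges w, e ∈ G.edgeSet ∧ Crosses C' e :=
      fun w hw => wedge_has_crossing_edge G C' hC' w (hW w hw)
    choose f hf1 hf2 using hch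
    classical
    have hfin : {e | e ∈ G.edgeSet ∧ Crosses C' e}.Finite := Set.toFinite _
    have hWfin : W.Finite := Set.toFinite _
    -- extend f to all of the type using a junk value via piecewise choice
    have : W.ncard ≤ {e | e ∈ G.edgeSet ∧ Crosses C' e}.ncard := by
      apply Set.ncard_le_ncard_of_injOn
        (fun w => if h : w ∈ W then f w h else s(w.2, w.2))
      · intro w hw
        simp only [dif_pos hw]
        exact hf2 w hw
      · intro w1 h1 w2 h2 heq
        simp only [dif_pos h1, dif_pos h2] at heq
        by_contra hne
        have := hdisj h1 h2 hne
        exact (this.ne_of_mem (hf1 w1 h1) (hf1 w2 h2)) heq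
    exact this
  refine ⟨main C hC, le_csInf ⟨cost G C, C, hC, rfl⟩ ?_⟩
  rintro c ⟨C', hC', rfl⟩
  exact main C' hC'

end CD
end

section
/- If W is a maximal edge-disjoint set of open wedges of G and E_W is the set of edges contained in some wedge of W, then E_W is an STC labeling of G, |E_W| = 2·|W|, and |E_W| ≤ 2·MinSTC(G). -/
open scoped Classical

namespace CD

variable {V : Type*}

variable [Fintype V] [DecidableEq V]

theorem statement_5 (G : SimpleGraph V) (W : Set (Sym2 V × V))
    (hW : ∀ w ∈ W, IsOpenWedge G w)
    (hdisj : W.Pairwise fun w₁ w₂ => Disjoint (wedgeEdges w₁) (wedgeEdges w₂))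
    (hmax : ∀ w, IsOpenWedge G w → ∃ w' ∈ W, ¬ Disjoint (wedgeEdges w) (wedgeEdges w'))
    (EW : Set (Sym2 V)) (hEWdef : EW = ⋃ w ∈ W, wedgeEdges w) :
    IsSTCLabeling G EW ∧ EW.ncard = 2 * W.ncard ∧ EW.ncard ≤ 2 * MinSTC G := by
  -- wedge edges description
  have hWE : ∀ w, IsOpenWedge G w → ∃ i j : V, wedgeEdges w = {s(i, w.2), s(j, w.2)} ∧
      s(i, w.2) ≠ s(j, w.2) ∧ G.Adj i w.2 ∧ G.Adj j w.2 := by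
    rintro ⟨p, k⟩ ⟨i, j, hp, hij, hik, hjk, _⟩
    obtain rfl : p = s(i, j) := hp
    refine ⟨i, j, ?_, ?_, hik, hjk⟩
    · ext e
      constructor
      · rintro ⟨x, hx, rfl⟩
        rw [Sym2.mem_iff] at hx
        rcases hx with rfl | rfl <;> simp
      · intro h
        rw [Set.mem_insert_iff, Set.mem_singleton_iff] at h
        rcases h with rfl | rfl
        exacts [⟨i, by simp, rfl⟩, ⟨j, by simp, rfl⟩]
    · intro h
      exact hij (Sym2.congr_left.mp h)
  have hedges : ∀ w ∈ W, wedgeEdges w ⊆ G.edgeSet := by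
    intro w hw
    obtain ⟨i, j, heq, _, hik, hjk⟩ := hWE w (hW w hw)
    rw [heq]
    rintro e (rfl | rfl)
    · exact hik
    · exact hjk
  -- Part 1: STC labeling
  have hlab : IsSTCLabeling G EW := by
    constructor
    · rw [hEWdef]
      exact Set.iUnion₂_subset hedges
    · intro i j k hij hik hjk hnadj
      have hw : IsOpenWedge G (s(i, j), k) := ⟨i, j, rfl, hij, hik, hjk, hnadj⟩
      obtain ⟨w', hw', hnd⟩ := hmax _ hw
      rw [Set.not_disjoint_iff] at hnd
      obtain ⟨e, he1, he2⟩ := hnd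
      have heEW : e ∈ EW := by
        rw [hEWdef]; exact Set.mem_biUnion hw' he2
      obtain ⟨x, hx, rfl⟩ := he1
      simp only [Sym2.mem_iff] at hx
      rcases hx with rfl | rfl
      · exact Or.inl heEW
      · exact Or.inr heEW
  refine ⟨hlab, ?_⟩
  -- finiteness
  have hWfin : W.Finite := Set.toFinite _
  -- Part 2: cardinality
  have hcard : EW.ncard = 2 * W.ncard := by
    classical
    have hdisjF : ∀ w₁ ∈ hWfin.toFinset, ∀ w₂ ∈ hWfin.toFinset, w₁ ≠ w₂ →
        Disjoint ((wedgeEdges w₁).toFinset) ((wedgeEdges w₂).toFinset) := by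
      intro w₁ h1 w₂ h2 hne
      rw [Set.Finite.mem_toFinset] at h1 h2
      have := hdisj h1 h2 hne
      rw [Finset.disjoint_left]
      intro e he1 he2
      rw [Set.mem_toFinset] at he1 he2
      exact Set.disjoint_left.mp this he1 he2
    have hEWF : EW = ↑(hWfin.toFinset.biUnion fun w => (wedgeEdges w).toFinset) := by
      rw [hEWdef]
      rw [Finset.coe_biUnion]
      ext e
      simp only [Set.Finite.coe_toFinset, Set.mem_iUnion, Set.coe_toFinset]
    rw [hEWF, Set.ncard_coe_finset, Finset.card_biUnion hdisjF]
    have : ∀ w ∈ hWfin.toFinset, ((wedgeEdges w).toFinset).card = 2 := by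
      intro w hw
      rw [Set.Finite.mem_toFinset] at hw
      obtain ⟨i, j, heq, hne, _, _⟩ := hWE w (hW w hw)
      rw [show (wedgeEdges w).toFinset = {s(i, w.2), s(j, w.2)} by
        ext e; simp [heq]]
      rw [Finset.card_insert_of_notMem (by simpa using hne), Finset.card_singleton]
    rw [Finset.sum_congr rfl this, Finset.sum_const, smul_eq_mul,
      Set.ncard_eq_toFinset_card W hWfin]
    omega
  refine ⟨hcard, ?_⟩
  -- Part 3
  have hne : {c | ∃ L : Set (Sym2 V), IsSTCLabeling G L ∧ L.ncard = c}.Nonempty :=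
    ⟨EW.ncard, EW, hlab, rfl⟩
  obtain ⟨L, hL, hLc⟩ := Nat.sInf_mem hne
  -- pick for each wedge an edge in L
  have hpick : ∀ w ∈ W, ∃ e, e ∈ wedgeEdges w ∧ e ∈ L := by
    intro w hw
    obtain ⟨i, j, hp, hij, hik, hjk, hnadj⟩ := hW w hw
    rcases hL.2 i j w.2 hij hik hjk hnadj with h | h
    · exact ⟨s(i, w.2), ⟨i, by simp [hp], rfl⟩, h⟩
    · exact ⟨s(j, w.2), ⟨j, by simp [hp], rfl⟩, h⟩
  choose f hf1 hf2 using hpick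
  classical
  have hWle : W.ncard ≤ L.ncard := by
    apply Set.ncard_le_ncard_of_injOn (fun w => if h : w ∈ W then f w h else s(w.2, w.2))
    · intro w hw
      simp only [dif_pos hw]
      exact hf2 w hw
    · intro w₁ h1 w₂ h2 heq
      simp only [dif_pos h1, dif_pos h2] at heq
      by_contra hne'
      have hd := hdisj h1 h2 hne'
      exact Set.disjoint_left.mp hd (hf1 w₁ h1) (heq ▸ hf1 w₂ h2)
  rw [hcard, MinSTC, ← hLc]
  omega

end CD
end

section
/- Let W be an edge-disjoint set of open wedges of G and let E_W be the set of edges contained in some wedge of W. For every clique partition C of G, the number of edges of E_W crossing C is at least |W| = |E_W|/2. -/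
/-! Every wedge of `W` has an edge crossing `C`: otherwise both of its endpoints would lie in the
part containing its center, which is a clique, although the endpoints are not adjacent. Since the
wedges are edge-disjoint, these crossing edges are distinct, and each wedge contributes exactly
two edges to `E_W`. -/

open scoped Classical

namespace Set

variable {α ι : Type*} [Finite α] {t : Set ι} {s : ι → Set α}

theorem ncard_biUnion_eq_mul (ht : t.Finite) (h : t.PairwiseDisjoint s) {n : ℕ}
    (hs : ∀ i ∈ t, (s i).ncard = n) : (⋃ i ∈ t, s i).ncard = n * t.ncard := by
  rw [ht.ncard_biUnion (fun i _ => toFinite (s i)) h, finsum_mem_eq_finite_toFinset_sum _ ht,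
    Finset.sum_congr rfl fun i hi => hs i (ht.mem_toFinset.1 hi), Finset.sum_const, smul_eq_mul,
    ncard_eq_toFinset_card t ht, mul_comm]

theorem ncard_le_ncard_biUnion (ht : t.Finite) (h : t.PairwiseDisjoint s)
    (hs : ∀ i ∈ t, (s i).Nonempty) : t.ncard ≤ (⋃ i ∈ t, s i).ncard := by
  rw [ht.ncard_biUnion (fun i _ => toFinite (s i)) h, finsum_mem_eq_finite_toFinset_sum _ ht,
    ncard_eq_toFinset_card t ht, Finset.card_eq_sum_ones]
  exact Finset.sum_le_sum fun i hi => (ncard_pos (toFinite _)).2 (hs i (ht.mem_toFinset.1 hi))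

end Set

namespace CD

variable {V : Type*}

variable [Fintype V] [DecidableEq V]

omit [Fintype V] [DecidableEq V] in
theorem wedgeEdges_eq {w : Sym2 V × V} {i j : V} (h : w.1 = s(i, j)) :
    wedgeEdges w = {s(i, w.2), s(j, w.2)} := by
  ext e
  simp only [wedgeEdges, h, Sym2.mem_iff, Set.mem_ofPred_eq, Set.mem_insert_iff,
    Set.mem_singleton_iff]
  constructor
  · rintro ⟨x, rfl | rfl, rfl⟩ <;> simp
  · rintro (rfl | rfl)
    exacts [⟨i, Or.inl rfl, rfl⟩, ⟨j, Or.inr rfl, rfl⟩]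

omit [Fintype V] [DecidableEq V] in
theorem IsOpenWedge.ncard_wedgeEdges {G : SimpleGraph V} {w : Sym2 V × V}
    (hw : IsOpenWedge G w) : (wedgeEdges w).ncard = 2 := by
  obtain ⟨i, j, hw1, hij, -, hjk, -⟩ := hw
  rw [wedgeEdges_eq hw1]
  refine Set.ncard_pair fun h => ?_
  rcases Sym2.eq_iff.mp h with ⟨rfl, -⟩ | ⟨rfl, rfl⟩
  · exact hij rfl
  · exact G.ne_of_adj hjk rfl

theorem IsCliquePartition.adj_of_not_crosses {G : SimpleGraph V}
    {C : Finpartition (Finset.univ : Finset V)} (hC : IsCliquePartition G C) {i j k : V}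
    (hij : i ≠ j) (hik : ¬ Crosses C s(i, k)) (hjk : ¬ Crosses C s(j, k)) : G.Adj i j := by
  simp only [Crosses, not_not, Sym2.forall_mem_pair] at hik hjk
  obtain ⟨P, hP, hiP, hkP⟩ := hik
  obtain ⟨Q, hQ, hjQ, hkQ⟩ := hjk
  obtain rfl := C.eq_of_mem_parts hP hQ hkP hkQ
  exact hC P hP hiP hjQ hij

theorem IsOpenWedge.exists_crosses {G : SimpleGraph V} {C : Finpartition (Finset.univ : Finset V)}
    (hC : IsCliquePartition G C) {w : Sym2 V × V} (hw : IsOpenWedge G w) :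
    ∃ e ∈ wedgeEdges w, Crosses C e := by
  obtain ⟨i, j, hw1, hij, -, -, hnadj⟩ := hw
  by_contra! h
  rw [wedgeEdges_eq hw1] at h
  exact hnadj (hC.adj_of_not_crosses hij (h _ (Set.mem_insert _ _))
    (h _ (Set.mem_insert_of_mem _ rfl)))

theorem statement_6 (G : SimpleGraph V) (W : Set (Sym2 V × V))
    (hW : ∀ w ∈ W, IsOpenWedge G w)
    (hdisj : W.Pairwise fun w₁ w₂ => Disjoint (wedgeEdges w₁) (wedgeEdges w₂))
    (EW : Set (Sym2 V)) (hEWdef : EW = ⋃ w ∈ W, wedgeEdges w)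
    (C : Finpartition (Finset.univ : Finset V)) (hC : IsCliquePartition G C) :
    W.ncard ≤ {e | e ∈ EW ∧ Crosses C e}.ncard ∧ 2 * W.ncard = EW.ncard := by
  subst hEWdef
  have hdisj : W.PairwiseDisjoint wedgeEdges := hdisj
  constructor
  · calc W.ncard ≤ (⋃ w ∈ W, {e ∈ wedgeEdges w | Crosses C e}).ncard :=
          Set.ncard_le_ncard_biUnion W.toFinite
            (hdisj.mono_on fun w _ => Set.sep_subset _ _)
            fun w hw => (hW w hw).exists_crosses hC
      _ ≤ {e | e ∈ ⋃ w ∈ W, wedgeEdges w ∧ Crosses C e}.ncard := by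
          refine Set.ncard_le_ncard ?_
          simp only [Set.subset_def, Set.mem_iUnion, Set.mem_ofPred_eq]
          exact fun e ⟨w, hw, he, hc⟩ => ⟨⟨w, hw, he⟩, hc⟩
  · exact (Set.ncard_biUnion_eq_mul W.toFinite hdisj
      fun w hw => (hW w hw).ncard_wedgeEdges).symm

end CD
end

section
/- For every even integer n ≥ 8, the minimum cluster deletion cost satisfies OPT_CD(G_n) = n/2, and this cost is attained by the clique partition whose parts are {v_1, …, v_{n/2}} and the singletons {u_1}, …, {u_{n/2}}. -/
open scoped Classical

namespace CD

variable {V : Type*}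

variable [Fintype V] [DecidableEq V]

/-- Cyclic successor on `Fin m` (i.e. `i + 1` modulo `m`). -/
def fnext {m : ℕ} (i : Fin m) : Fin m := i + ⟨1 % m, Nat.mod_lt 1 i.pos⟩

/-- Cyclic predecessor on `Fin m` (i.e. `i - 1` modulo `m`). -/
def fprev {m : ℕ} (i : Fin m) : Fin m := i - ⟨1 % m, Nat.mod_lt 1 i.pos⟩

/-- The graph `G_n` (with `m = n/2`): vertices `Sum.inl i = vᵢ` and `Sum.inr i = uᵢ`;
the `vᵢ` form a clique and each `uᵢ` is pendant, adjacent only to `vᵢ`. -/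
def Gn (m : ℕ) : SimpleGraph (Fin m ⊕ Fin m) :=
  SimpleGraph.fromRel (fun a b =>
    match a, b with
    | Sum.inl _, Sum.inl _ => True
    | Sum.inl i, Sum.inr j => i = j
    | _, _ => False)

/-- The parts of the canonical clique partition of `G_n`:
the clique `{v₁, …, v_{n/2}}` together with the singletons `{uⱼ}`. -/
def Pstar (m : ℕ) : Finset (Finset (Fin m ⊕ Fin m)) :=
  insert ((Finset.univ : Finset (Fin m)).image Sum.inl)
    ((Finset.univ : Finset (Fin m)).image (fun j => {Sum.inr j}))

/-- The wedge set `W_n = { (vᵢ, u_{i+1}, v_{i+1}) : i }`, each wedge centered at `v_{i+1}`,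
indices taken modulo `m = n/2`. -/
def Wn (m : ℕ) : Set (Sym2 (Fin m ⊕ Fin m) × (Fin m ⊕ Fin m)) :=
  {w | ∃ i : Fin m, w = (s(Sum.inl i, Sum.inr (fnext i)), Sum.inl (fnext i))}

/-- The pendant edges `{uᵢ, vᵢ}` together with the cycle edges `{vᵢ, v_{i+1}}`
(indices modulo `m = n/2`). -/
def EWn (m : ℕ) : Set (Sym2 (Fin m ⊕ Fin m)) :=
  {e | ∃ i : Fin m, e = s(Sum.inr i, Sum.inl i)} ∪
  {e | ∃ i : Fin m, e = s(Sum.inl i, Sum.inl (fnext i))}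

/-!
Putting all `vᵢ` in one part and every `uᵢ` in a part of its own cuts exactly the `n/2` pendant
edges. Conversely, the two ends of an open wedge are non-adjacent, so they cannot share a part of a
clique partition, and one of the two wedge edges is cut. The wedges `uᵢ – vᵢ – v_{i+1}` (indices
modulo `n/2`) are open and pairwise edge-disjoint as soon as `n/2 ≥ 3`, so every clique partition
cuts at least `n/2` edges.
-/

section CliquePartition

variable {G : SimpleGraph V} {C : Finpartition (Finset.univ : Finset V)}

lemma crosses_mk_iff {a b : V} : Crosses C s(a, b) ↔ a ∉ C.part b := by
  simp [Crosses, Finpartition.mem_part_iff_exists]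

lemma IsCliquePartition.adj_of_not_crosses_s8 (hC : IsCliquePartition G C) {a b k : V}
    (hab : a ≠ b) (ha : ¬ Crosses C s(a, k)) (hb : ¬ Crosses C s(b, k)) : G.Adj a b := by
  rw [crosses_mk_iff, not_not] at ha hb
  exact hC _ (C.part_mem.2 (Finset.mem_univ k)) ha hb hab

lemma wedgeEdges_mk {α : Type*} (a b k : α) : wedgeEdges (s(a, b), k) = {s(a, k), s(b, k)} := by
  ext e
  simp [wedgeEdges, eq_comm]

lemma IsCliquePartition.exists_crosses_of_isOpenWedge (hC : IsCliquePartition G C)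
    {w : Sym2 V × V} (hw : IsOpenWedge G w) :
    ∃ e ∈ wedgeEdges w, e ∈ G.edgeSet ∧ Crosses C e := by
  obtain ⟨p, k⟩ := w
  obtain ⟨i, j, rfl, hij, hik, hjk, hnij⟩ := hw
  rw [wedgeEdges_mk]
  by_contra! h
  exact hnij (hC.adj_of_not_crosses_s8 hij (h _ (by simp) hik) (h _ (by simp) hjk))

lemma IsCliquePartition.card_le_cost {ι : Type*} (hC : IsCliquePartition G C)
    (w : ι → Sym2 V × V) (hw : ∀ i, IsOpenWedge G (w i))
    (hdisj : Pairwise (Function.onFun Disjoint (wedgeEdges ∘ w))) : Nat.card ι ≤ cost G C := by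
  choose f hf_mem hf_cross using fun i => hC.exists_crosses_of_isOpenWedge (hw i)
  have hf_inj : Function.Injective f := fun i j hij => by
    by_contra hne
    exact Set.disjoint_left.1 (hdisj hne) (hf_mem i) (hij ▸ hf_mem j)
  rw [← Set.ncard_univ]
  exact Set.ncard_le_ncard_of_injOn f (fun i _ => hf_cross i) hf_inj.injOn

lemma OPTCD_eq_of_isLeast {c : ℕ}
    (h : IsLeast {c | ∃ C : Finpartition (Finset.univ : Finset V),
      IsCliquePartition G C ∧ cost G C = c} c) : OPTCD G = c :=
  h.csInf_eq

end CliquePartition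

section Gn

variable {m : ℕ}

@[simp]
lemma Gn_adj_inl_inl (i j : Fin m) : (Gn m).Adj (Sum.inl i) (Sum.inl j) ↔ i ≠ j := by
  simp [Gn]

@[simp]
lemma Gn_adj_inl_inr (i j : Fin m) : (Gn m).Adj (Sum.inl i) (Sum.inr j) ↔ i = j := by
  simp [Gn]

@[simp]
lemma Gn_adj_inr_inl (i j : Fin m) : (Gn m).Adj (Sum.inr i) (Sum.inl j) ↔ j = i := by
  simp [Gn]

@[simp]
lemma Gn_not_adj_inr_inr (i j : Fin m) : ¬ (Gn m).Adj (Sum.inr i) (Sum.inr j) := by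
  simp [Gn]

lemma fnext_val (hm : 2 ≤ m) (i : Fin m) :
    (fnext i).val = if i.val + 1 = m then 0 else i.val + 1 := by
  have hi := i.isLt
  rw [fnext, Fin.val_add]
  dsimp only
  rw [Nat.mod_eq_of_lt (by omega : 1 < m)]
  split_ifs with h
  · rw [h, Nat.mod_self]
  · exact Nat.mod_eq_of_lt (by omega)

lemma fnext_ne (hm : 2 ≤ m) (i : Fin m) : fnext i ≠ i := by
  rw [Ne, Fin.ext_iff, fnext_val hm]
  split_ifs <;> omega

lemma fnext_fnext_ne (hm : 3 ≤ m) (i : Fin m) : fnext (fnext i) ≠ i := by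
  have hi := i.isLt
  rw [Ne, Fin.ext_iff, fnext_val (by omega), fnext_val (by omega)]
  split_ifs <;> omega

lemma mem_Pstar {P : Finset (Fin m ⊕ Fin m)} :
    P ∈ Pstar m ↔ P = Finset.univ.image Sum.inl ∨ ∃ j, P = {Sum.inr j} := by
  simp [Pstar, eq_comm]

def Cstar (m : ℕ) (hm : 0 < m) : Finpartition (Finset.univ : Finset (Fin m ⊕ Fin m)) where
  parts := Pstar m
  supIndep := by
    rw [Finset.supIndep_iff_pairwiseDisjoint]
    rintro P hP Q hQ hPQ
    rw [Finset.mem_coe, mem_Pstar] at hP hQ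
    rcases hP with rfl | ⟨j, rfl⟩ <;> rcases hQ with rfl | ⟨k, rfl⟩
    · exact absurd rfl hPQ
    · simp [Function.onFun]
    · simp [Function.onFun]
    · simpa [Function.onFun] using fun h : j = k => hPQ (h ▸ rfl)
  sup_parts := by
    refine Finset.eq_univ_of_forall fun x => Finset.mem_sup.2 ?_
    rcases x with i | j
    · exact ⟨_, mem_Pstar.2 (Or.inl rfl), by simp⟩
    · exact ⟨_, mem_Pstar.2 (Or.inr ⟨j, rfl⟩), by simp⟩
  bot_notMem := by
    rw [mem_Pstar]
    rintro (h | ⟨j, h⟩)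
    · simpa using congrArg (Sum.inl ⟨0, hm⟩ ∈ ·) h
    · simp at h

lemma isCliquePartition_Cstar (hm : 0 < m) : IsCliquePartition (Gn m) (Cstar m hm) := by
  intro P hP
  rcases mem_Pstar.1 hP with rfl | ⟨j, rfl⟩
  · rw [Finset.coe_image, Finset.coe_univ, Set.image_univ]
    rintro _ ⟨i, rfl⟩ _ ⟨k, rfl⟩ hik
    simpa using fun h : i = k => hik (h ▸ rfl)
  · simp

lemma cost_Cstar_le (hm : 0 < m) : cost (Gn m) (Cstar m hm) ≤ m := by
  have hsub : {e | e ∈ (Gn m).edgeSet ∧ Crosses (Cstar m hm) e} ⊆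
      Set.range fun i : Fin m => s(Sum.inr i, Sum.inl i) := by
    rintro e ⟨he, hcross⟩
    induction e using Sym2.ind with
    | _ a b =>
      rcases a with i | i <;> rcases b with j | j
      · exact (hcross ⟨_, mem_Pstar.2 (Or.inl rfl), by simp⟩).elim
      · obtain rfl : i = j := by simpa using he
        exact ⟨i, Sym2.eq_swap⟩
      · obtain rfl : j = i := by simpa using he
        exact ⟨j, rfl⟩
      · simp at he
  calc cost (Gn m) (Cstar m hm)
      ≤ (Set.range fun i : Fin m => s(Sum.inr i, Sum.inl i)).ncard :=
        Set.ncard_le_ncard hsub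
    _ ≤ (Set.univ : Set (Fin m)).ncard := by
        rw [← Set.image_univ]; exact Set.ncard_image_le
    _ = m := by simp

/-- The wedge `uᵢ – vᵢ – v_{i+1}` centered at `vᵢ`. -/
def pendantWedge (i : Fin m) : Sym2 (Fin m ⊕ Fin m) × (Fin m ⊕ Fin m) :=
  (s(Sum.inr i, Sum.inl (fnext i)), Sum.inl i)

lemma isOpenWedge_pendantWedge (hm : 2 ≤ m) (i : Fin m) :
    IsOpenWedge (Gn m) (pendantWedge i) :=
  ⟨_, _, rfl, by simp, by simp [pendantWedge], by simpa [pendantWedge] using fnext_ne hm i,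
    by simpa using fnext_ne hm i⟩

lemma pairwise_disjoint_wedgeEdges_pendantWedge (hm : 3 ≤ m) :
    Pairwise (Function.onFun Disjoint (wedgeEdges ∘ pendantWedge (m := m))) := by
  intro i j hij
  simp only [Function.onFun, Function.comp_apply, pendantWedge, wedgeEdges_mk]
  simpa [Set.disjoint_insert_right, hij.symm] using
    fun (h : fnext j = i) (hj : j = fnext i) => fnext_fnext_ne hm i (hj ▸ h)

lemma le_cost_Gn (hm : 3 ≤ m) {C : Finpartition (Finset.univ : Finset (Fin m ⊕ Fin m))}
    (hC : IsCliquePartition (Gn m) C) : m ≤ cost (Gn m) C := by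
  simpa using hC.card_le_cost pendantWedge (isOpenWedge_pendantWedge (by omega))
    (pairwise_disjoint_wedgeEdges_pendantWedge hm)

end Gn

theorem statement_8_general (n : ℕ) (h8 : 8 ≤ n) :
    OPTCD (Gn (n / 2)) = n / 2 ∧
    ∃ C : Finpartition (Finset.univ : Finset (Fin (n / 2) ⊕ Fin (n / 2))),
      C.parts = Pstar (n / 2) ∧ IsCliquePartition (Gn (n / 2)) C ∧
      cost (Gn (n / 2)) C = n / 2 := by
  have hm : 3 ≤ n / 2 := by omega
  have hCstar := isCliquePartition_Cstar (m := n / 2) (by omega)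
  have hcost := (cost_Cstar_le (by omega)).antisymm (le_cost_Gn hm hCstar)
  exact ⟨OPTCD_eq_of_isLeast ⟨⟨_, hCstar, hcost⟩, fun _ ⟨_, hC, hc⟩ => hc ▸ le_cost_Gn hm hC⟩,
    _, rfl, hCstar, hcost⟩

theorem statement_8 (n : ℕ) (hn : Even n) (h8 : 8 ≤ n) :
    OPTCD (Gn (n / 2)) = n / 2 ∧
    ∃ C : Finpartition (Finset.univ : Finset (Fin (n / 2) ⊕ Fin (n / 2))),
      C.parts = Pstar (n / 2) ∧ IsCliquePartition (Gn (n / 2)) C ∧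
      cost (Gn (n / 2)) C = n / 2 :=
  statement_8_general n h8

end CD
end

section
/- If (y, z) is a feasible solution of (IP2) for G, then x defined by x_e = (y_e − z_e + 1)/2 for every e ∈ E is a feasible half-integral solution of the STC LP for G whose objective value Σ_{e ∈ E} x_e equals the (IP2) objective value Σ_{e ∈ E} (y_e + 1 − z_e)/2. -/
open scoped Classical

namespace CD

variable {V : Type*}

variable [Fintype V] [DecidableEq V]

theorem statement_12 (G : SimpleGraph V) (y z : Sym2 V → ℚ) (h : IP2Feasible G y z) :
    LPFeasible G (fun e => (y e - z e + 1) / 2) ∧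
    HalfIntegral G (fun e => (y e - z e + 1) / 2) ∧
    ∑ e ∈ G.edgeFinset, (y e - z e + 1) / 2 = ∑ e ∈ G.edgeFinset, (y e + 1 - z e) / 2 := by
  obtain ⟨hb, hw⟩ := h
  refine ⟨⟨fun e he => ?_, fun i j k hij hik hjk hnij => ?_⟩,
    fun e he => ?_, Finset.sum_congr rfl fun e _ => by ring⟩
  · obtain ⟨hy, hz⟩ := hb e he
    rcases hy with hy | hy <;> rcases hz with hz | hz <;> simp only [hy, hz] <;> norm_num
  · have h1 := hw i j k hij hik hjk hnij
    linarith [h1.1, h1.2]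
  · obtain ⟨hy, hz⟩ := hb e he
    rcases hy with hy | hy <;> rcases hz with hz | hz <;> simp only [hy, hz] <;> norm_num

end CD
end

section
/- If x is a feasible half-integral solution of the STC LP for G, then (y, z) defined for every e ∈ E by (y_e, z_e) = (0,1) when x_e = 0, (y_e, z_e) = (1,1) when x_e = 1/2, and (y_e, z_e) = (1,0) when x_e = 1, is a feasible solution of (IP2) for G whose objective value Σ_{e ∈ E} (y_e + 1 − z_e)/2 equals Σ_{e ∈ E} x_e. -/
open scoped Classical

namespace CD

variable {V : Type*}

variable [Fintype V] [DecidableEq V]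

theorem statement_13 (G : SimpleGraph V) (x : Sym2 V → ℚ)
    (hx : LPFeasible G x) (hhi : HalfIntegral G x)
    (y z : Sym2 V → ℚ)
    (hdef : ∀ e ∈ G.edgeSet,
      (x e = 0 → y e = 0 ∧ z e = 1) ∧
      (x e = 1 / 2 → y e = 1 ∧ z e = 1) ∧
      (x e = 1 → y e = 1 ∧ z e = 0)) :
    IP2Feasible G y z ∧
    ∑ e ∈ G.edgeFinset, (y e + 1 - z e) / 2 = ∑ e ∈ G.edgeFinset, x e := by
  have hyz : ∀ e ∈ G.edgeSet, (y e = 0 ∨ y e = 1) ∧ (z e = 0 ∨ z e = 1) := by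
    intro e he
    rcases hhi e he with h | h | h
    · rcases (hdef e he).1 h with ⟨h1, h2⟩; exact ⟨Or.inl h1, Or.inr h2⟩
    · rcases (hdef e he).2.1 h with ⟨h1, h2⟩; exact ⟨Or.inr h1, Or.inr h2⟩
    · rcases (hdef e he).2.2 h with ⟨h1, h2⟩; exact ⟨Or.inr h1, Or.inl h2⟩
  have hz1 : ∀ e ∈ G.edgeSet, z e ≤ 1 - x e + 1/2 := by
    intro e he
    rcases hhi e he with h | h | h
    · rw [h, ((hdef e he).1 h).2]; norm_num
    · rw [h, ((hdef e he).2.1 h).2]; norm_num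
    · rw [h, ((hdef e he).2.2 h).2]; norm_num
  have hy1 : ∀ e ∈ G.edgeSet, x e ≠ 0 → y e = 1 := by
    intro e he hne
    rcases hhi e he with h | h | h
    · exact absurd h hne
    · exact ((hdef e he).2.1 h).1
    · exact ((hdef e he).2.2 h).1
  constructor
  · refine ⟨hyz, ?_⟩
    intro i j k hij hik hjk hnij
    have hik' : s(i, k) ∈ G.edgeSet := hik
    have hjk' : s(j, k) ∈ G.edgeSet := hjk
    have hge := hx.2 i j k hij hik hjk hnij
    have aux : ∀ a b : V, G.Adj a b → x s(a,b) ≥ 1/2 → z s(b, a) ≤ y s(a, b) := by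
      intro a b hab hge2
      have hab' : s(a,b) ∈ G.edgeSet := hab
      have : y s(a,b) = 1 := hy1 _ hab' (by intro h0; rw [h0] at hge2; norm_num at hge2)
      rw [this]
      rcases (hyz s(b,a) (by rwa [Sym2.eq_swap])).2 with h | h <;> rw [h] <;> norm_num
    constructor
    · -- z s(i,k) ≤ y s(j,k) : if z_{ik} = 1 then x_{ik} ≤ 1/2 so x_{jk} ≥ 1/2
      rcases (hyz _ hik').2 with h | h
      · rw [h]
        rcases (hyz _ hjk').1 with h2 | h2 <;> rw [h2] <;> norm_num
      · have hx_ik : x s(i,k) ≤ 1/2 := by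
          have := hz1 _ hik'; rw [h] at this; linarith
        have hge2 : x s(j,k) ≥ 1/2 := by linarith
        rw [h, hy1 _ hjk' (by intro h0; rw [h0] at hge2; norm_num at hge2)]
    · rcases (hyz _ hjk').2 with h | h
      · rw [h]
        rcases (hyz _ hik').1 with h2 | h2 <;> rw [h2] <;> norm_num
      · have hx_jk : x s(j,k) ≤ 1/2 := by
          have := hz1 _ hjk'; rw [h] at this; linarith
        have : x s(i,k) ≥ 1/2 := by linarith
        rw [h, hy1 _ hik' (by intro h0; rw [h0] at this; norm_num at this)]
  · apply Finset.sum_congr rfl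
    intro e he
    have he' : e ∈ G.edgeSet := SimpleGraph.mem_edgeFinset.mp he
    rcases hhi e he' with h | h | h
    · rcases (hdef e he').1 h with ⟨h1, h2⟩; rw [h1, h2, h]; norm_num
    · rcases (hdef e he').2.1 h with ⟨h1, h2⟩; rw [h1, h2, h]; norm_num
    · rcases (hdef e he').2.2 h with ⟨h1, h2⟩; rw [h1, h2, h]; norm_num

end CD
end

section
/- The minimum objective value of (IP2) for G over all feasible (y, z) equals the minimum of Σ_{e ∈ E} x_e over all feasible half-integral solutions x of the STC LP for G. -/
open scoped Classical

namespace CD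

variable {V : Type*}

variable [Fintype V] [DecidableEq V]

theorem statement_14 (G : SimpleGraph V) :
    ∃ q : ℚ,
      IsLeast {v : ℚ | ∃ y z : Sym2 V → ℚ, IP2Feasible G y z ∧
        v = ∑ e ∈ G.edgeFinset, (y e + 1 - z e) / 2} q ∧
      IsLeast {v : ℚ | ∃ x : Sym2 V → ℚ, LPFeasible G x ∧ HalfIntegral G x ∧
        v = ∑ e ∈ G.edgeFinset, x e} q := by
  classical
  have hset : {v : ℚ | ∃ y z : Sym2 V → ℚ, IP2Feasible G y z ∧
        v = ∑ e ∈ G.edgeFinset, (y e + 1 - z e) / 2} =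
      {v : ℚ | ∃ x : Sym2 V → ℚ, LPFeasible G x ∧ HalfIntegral G x ∧
        v = ∑ e ∈ G.edgeFinset, x e} := by
    ext v
    constructor
    · rintro ⟨y, z, ⟨hbin, hcon⟩, rfl⟩
      refine ⟨fun e => (y e + 1 - z e) / 2, ⟨?_, ?_⟩, ?_, rfl⟩
      · intro e he
        rcases hbin e he with ⟨hy | hy, hz | hz⟩ <;> simp only [hy, hz] <;> norm_num
      · intro i j k hij hik hjk hnij
        obtain ⟨h1, h2⟩ := hcon i j k hij hik hjk hnij
        dsimp only
        linarith
      · intro e he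
        rcases hbin e he with ⟨hy | hy, hz | hz⟩ <;> simp only [hy, hz] <;> norm_num
    · rintro ⟨x, ⟨hpos, hcon⟩, hhalf, rfl⟩
      refine ⟨fun e => if x e = 0 then 0 else 1, fun e => if x e = 1 then 0 else 1,
        ⟨?_, ?_⟩, ?_⟩
      · intro e he
        constructor <;> dsimp only <;> split_ifs <;> simp
      · intro i j k hij hik hjk hnij
        have h1 := hhalf s(i, k) (G.mem_edgeSet.2 hik)
        have h2 := hhalf s(j, k) (G.mem_edgeSet.2 hjk)
        have h3 := hcon i j k hij hik hjk hnij
        constructor <;>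
          · rcases h1 with h1 | h1 | h1 <;> rcases h2 with h2 | h2 | h2 <;>
              simp only [h1, h2] <;> norm_num <;> linarith
      · refine Finset.sum_congr rfl fun e he => ?_
        rcases hhalf e (SimpleGraph.mem_edgeFinset.1 he) with h | h | h <;>
          norm_num [h]
  have hfin : {v : ℚ | ∃ y z : Sym2 V → ℚ, IP2Feasible G y z ∧
      v = ∑ e ∈ G.edgeFinset, (y e + 1 - z e) / 2}.Finite := by
    apply Set.Finite.subset (Set.finite_range
      (fun p : (Sym2 V → Bool) × (Sym2 V → Bool) =>
        ∑ e ∈ G.edgeFinset, ((if p.1 e then (1 : ℚ) else 0) + 1 -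
          (if p.2 e then 1 else 0)) / 2))
    rintro v ⟨y, z, ⟨hbin, _⟩, rfl⟩
    refine ⟨(fun e => decide (y e = 1), fun e => decide (z e = 1)), ?_⟩
    refine Finset.sum_congr rfl fun e he => ?_
    rcases hbin e (SimpleGraph.mem_edgeFinset.1 he) with ⟨hy | hy, hz | hz⟩ <;>
      simp [hy, hz]
  have hne : {v : ℚ | ∃ y z : Sym2 V → ℚ, IP2Feasible G y z ∧
      v = ∑ e ∈ G.edgeFinset, (y e + 1 - z e) / 2}.Nonempty := by
    refine ⟨_, fun _ => 1, fun _ => 0, ⟨fun e _ => ⟨Or.inr rfl, Or.inl rfl⟩, ?_⟩, rfl⟩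
    intro i j k _ _ _ _
    norm_num
  obtain ⟨q, hqmem, hqlb⟩ := Finset.exists_min_image hfin.toFinset id
    (by simpa [Set.Finite.toFinset_nonempty] using hne)
  rw [Set.Finite.mem_toFinset] at hqmem
  have hlb : ∀ v ∈ {v : ℚ | ∃ y z : Sym2 V → ℚ, IP2Feasible G y z ∧
      v = ∑ e ∈ G.edgeFinset, (y e + 1 - z e) / 2}, q ≤ v := by
    intro v hv
    exact hqlb v (hfin.mem_toFinset.2 hv)
  exact ⟨q, ⟨hqmem, hlb⟩, hset ▸ ⟨hqmem, hlb⟩⟩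

end CD
end

section
/- If C is a clique partition of G, then the set of edges of G crossing C is an STC labeling of G; consequently MinSTC(G) ≤ OPT_CD(G). -/
open scoped Classical

namespace CD

variable {V : Type*}

variable [Fintype V] [DecidableEq V]

theorem statement_15 (G : SimpleGraph V)
    (C : Finpartition (Finset.univ : Finset V)) (hC : IsCliquePartition G C) :
    IsSTCLabeling G {e | e ∈ G.edgeSet ∧ Crosses C e} ∧ MinSTC G ≤ OPTCD G := by
  have key : ∀ (C' : Finpartition (Finset.univ : Finset V)), IsCliquePartition G C' →
      IsSTCLabeling G {e | e ∈ G.edgeSet ∧ Crosses C' e} := by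
    intro C' hC'
    constructor
    · intro e he; exact he.1
    · intro i j k hij hik hjk hnij
      by_contra h
      push_neg at h
      obtain ⟨h1, h2⟩ := h
      simp only [Set.mem_setOf_eq, not_and] at h1 h2
      have c1 := h1 hik.symm.symm
      have c2 := h2 hjk.symm.symm
      simp only [Crosses, not_not] at c1 c2
      obtain ⟨P, hP, hPm⟩ := c1
      obtain ⟨Q, hQ, hQm⟩ := c2
      have hiP : i ∈ P := hPm i (by simp)
      have hkP : k ∈ P := hPm k (by simp)
      have hjQ : j ∈ Q := hQm j (by simp)
      have hkQ : k ∈ Q := hQm k (by simp)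
      have hPQ : P = Q := C'.eq_of_mem_parts hP hQ hkP hkQ
      subst hPQ
      exact hnij (hC' P hP hiP hjQ hij)
  refine ⟨key C hC, ?_⟩
  refine le_csInf ⟨cost G C, C, hC, rfl⟩ ?_
  rintro c ⟨C', hC', rfl⟩
  exact Nat.sInf_le ⟨{e | e ∈ G.edgeSet ∧ Crosses C' e}, key C' hC', rfl⟩

end CD
end

section
/- For every clique partition C of G, the assignment x defined by x_e = 1 if e crosses C and x_e = 0 otherwise is a feasible solution of the STC LP for G with objective value Σ_{e ∈ E} x_e equal to the cost of C; consequently every feasible solution of the STC LP of minimum objective value has objective value at most OPT_CD(G). -/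
open scoped Classical

namespace CD

variable {V : Type*}

variable [Fintype V] [DecidableEq V]

lemma key_lemma (G : SimpleGraph V)
    (C : Finpartition (Finset.univ : Finset V)) (hC : IsCliquePartition G C) :
    LPFeasible G (fun e => if Crosses C e then 1 else 0) ∧
      (∑ e ∈ G.edgeFinset, (if Crosses C e then (1 : ℚ) else 0)) = (cost G C : ℚ) := by
  constructor
  · constructor
    · intro e _
      by_cases h : Crosses C e <;> simp [h]
    · intro i j k hij hik hjk hnij
      by_cases h1 : Crosses C s(i, k)
      · have : (0:ℚ) ≤ if Crosses C s(j,k) then (1:ℚ) else 0 := by positivity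
        simp only [h1, if_true]; linarith
      · by_cases h2 : Crosses C s(j, k)
        · have : (0:ℚ) ≤ if Crosses C s(i,k) then (1:ℚ) else 0 := by positivity
          simp only [h2, if_true]; linarith
        · exfalso
          rw [Crosses, not_not] at h1 h2
          obtain ⟨P, hP, hPm⟩ := h1
          obtain ⟨Q, hQ, hQm⟩ := h2
          have hiP : i ∈ P := hPm i (by simp)
          have hkP : k ∈ P := hPm k (by simp)
          have hjQ : j ∈ Q := hQm j (by simp)
          have hkQ : k ∈ Q := hQm k (by simp)
          have hPQ : P = Q := C.eq_of_mem_parts hP hQ hkP hkQ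
          exact hnij ((hC P hP hiP (hPQ ▸ hjQ) hij))
  · have hset : {e | e ∈ G.edgeSet ∧ Crosses C e} =
        ↑(G.edgeFinset.filter (fun e => Crosses C e)) := by
      ext e
      simp [SimpleGraph.mem_edgeFinset]
    rw [Finset.sum_boole, cost, hset, Set.ncard_coe_finset]

theorem statement_16 (G : SimpleGraph V)
    (C : Finpartition (Finset.univ : Finset V)) (hC : IsCliquePartition G C) :
    (LPFeasible G (fun e => if Crosses C e then 1 else 0) ∧
      (∑ e ∈ G.edgeFinset, (if Crosses C e then (1 : ℚ) else 0)) = (cost G C : ℚ)) ∧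
    ∀ q : ℚ,
      IsLeast {v : ℚ | ∃ x : Sym2 V → ℚ, LPFeasible G x ∧ v = ∑ e ∈ G.edgeFinset, x e} q →
      q ≤ (OPTCD G : ℚ) := by
  refine ⟨key_lemma G C hC, ?_⟩
  intro q hq
  have hne : {c | ∃ C : Finpartition (Finset.univ : Finset V),
      IsCliquePartition G C ∧ cost G C = c}.Nonempty := ⟨cost G C, C, hC, rfl⟩
  obtain ⟨C', hC', hcost⟩ := Nat.sInf_mem hne
  have hk := key_lemma G C' hC'
  have : (∑ e ∈ G.edgeFinset, (if Crosses C' e then (1 : ℚ) else 0)) ∈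
      {v : ℚ | ∃ x : Sym2 V → ℚ, LPFeasible G x ∧ v = ∑ e ∈ G.edgeFinset, x e} :=
    ⟨_, hk.1, rfl⟩
  have hle := hq.2 this
  rw [hk.2, hcost] at hle
  exact hle

end CD
end

section
/- Let x be a feasible half-integral solution of the STC LP for G, let C be a clique partition of G, let B_h be the set of edges e ∈ E with x_e = 1/2 crossing C, and let N_h be the set of edges e ∈ E with x_e = 1/2 whose endpoints lie in the same part of C. Then x̂ defined by x̂_e = 1 for e ∈ B_h, x̂_e = 0 for e ∈ N_h, and x̂_e = x_e otherwise, is a feasible half-integral solution of the STC LP. Moreover, if x has minimum objective value among all feasible half-integral solutions, then |N_h| ≤ |B_h|, and hence |N_h| ≤ |E_h|/2 where E_h = { e ∈ E : x_e = 1/2 }. -/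
open scoped Classical

namespace CD

variable {V : Type*}

variable [Fintype V] [DecidableEq V]

theorem statement_17 (G : SimpleGraph V) (x : Sym2 V → ℚ)
    (hx : LPFeasible G x) (hhi : HalfIntegral G x)
    (C : Finpartition (Finset.univ : Finset V)) (hC : IsCliquePartition G C)
    (Bh Nh Eh : Set (Sym2 V))
    (hBh : Bh = {e | e ∈ G.edgeSet ∧ x e = 1 / 2 ∧ Crosses C e})
    (hNh : Nh = {e | e ∈ G.edgeSet ∧ x e = 1 / 2 ∧ ¬ Crosses C e})
    (hEh : Eh = {e | e ∈ G.edgeSet ∧ x e = 1 / 2}) :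
    (LPFeasible G (fun e => if e ∈ Bh then 1 else if e ∈ Nh then 0 else x e) ∧
      HalfIntegral G (fun e => if e ∈ Bh then 1 else if e ∈ Nh then 0 else x e)) ∧
    ((∀ x' : Sym2 V → ℚ, LPFeasible G x' → HalfIntegral G x' →
        ∑ e ∈ G.edgeFinset, x e ≤ ∑ e ∈ G.edgeFinset, x' e) →
      Nh.ncard ≤ Bh.ncard ∧ 2 * Nh.ncard ≤ Eh.ncard) := by

  classical
  set xh : Sym2 V → ℚ := fun e => if e ∈ Bh then 1 else if e ∈ Nh then 0 else x e with hxhdef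
  have hBmem : ∀ e, e ∈ Bh ↔ e ∈ G.edgeSet ∧ x e = 1 / 2 ∧ Crosses C e := by
    intro e; rw [hBh]; rfl
  have hNmem : ∀ e, e ∈ Nh ↔ e ∈ G.edgeSet ∧ x e = 1 / 2 ∧ ¬ Crosses C e := by
    intro e; rw [hNh]; rfl
  have hdisj : Disjoint Bh Nh := by
    rw [Set.disjoint_left]
    intro e heB heN
    exact ((hNmem e).1 heN).2.2 ((hBmem e).1 heB).2.2
  -- key lemma: if one wedge edge is in Nh, the other gets value 1
  have key : ∀ i j k : V, i ≠ j → G.Adj i k → G.Adj j k → ¬ G.Adj i j →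
      s(i, k) ∈ Nh → xh s(j, k) = 1 := by
    intro i j k hij hik hjk hnij hN
    obtain ⟨hik_e, hxik, hncik⟩ := (hNmem _).1 hN
    rw [Crosses, not_not] at hncik
    obtain ⟨P, hP, hPm⟩ := hncik
    have hiP : i ∈ P := hPm i (by simp)
    have hkP : k ∈ P := hPm k (by simp)
    have hcross : Crosses C s(j, k) := by
      rintro ⟨Q, hQ, hQm⟩
      have hjQ : j ∈ Q := hQm j (by simp)
      have hkQ : k ∈ Q := hQm k (by simp)
      have hPQ : P = Q := C.eq_of_mem_parts hP hQ hkP hkQ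
      exact hnij (hC P hP (Finset.mem_coe.mpr hiP)
        (Finset.mem_coe.mpr (hPQ ▸ hjQ)) hij)
    have hjk_e : s(j, k) ∈ G.edgeSet := hjk
    have hge : (1 : ℚ) / 2 ≤ x s(j, k) := by
      have := hx.2 i j k hij hik hjk hnij
      linarith
    have hNjk : s(j, k) ∉ Nh := fun h => ((hNmem _).1 h).2.2 hcross
    rcases hhi _ hjk_e with h0 | h12 | h1
    · linarith
    · have hBjk : s(j, k) ∈ Bh := (hBmem _).2 ⟨hjk_e, h12, hcross⟩
      simp only [hxhdef, if_pos hBjk]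
    · have hBjk : s(j, k) ∉ Bh := fun h => by
        have := ((hBmem _).1 h).2.1; rw [h1] at this; norm_num at this
      simp only [hxhdef, if_neg hBjk, if_neg hNjk]; exact h1
  have hmono : ∀ e ∈ G.edgeSet, e ∉ Nh → x e ≤ xh e := by
    intro e he hN
    by_cases hB : e ∈ Bh
    · have := ((hBmem e).1 hB).2.1
      simp only [hxhdef, if_pos hB]; rw [this]; norm_num
    · simp only [hxhdef, if_neg hB, if_neg hN]; exact le_refl _
  have hnonneg : ∀ e ∈ G.edgeSet, 0 ≤ xh e := by
    intro e he
    simp only [hxhdef]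
    split_ifs with h1 h2
    · norm_num
    · norm_num
    · exact hx.1 e he
  have hfeas : LPFeasible G xh := by
    refine ⟨hnonneg, ?_⟩
    intro i j k hij hik hjk hnij
    by_cases hNik : s(i, k) ∈ Nh
    · have h1 := key i j k hij hik hjk hnij hNik
      have h0 := hnonneg s(i, k) hik
      linarith
    by_cases hNjk : s(j, k) ∈ Nh
    · have h1 := key j i k hij.symm hjk hik (fun h => hnij h.symm) hNjk
      have h0 := hnonneg s(j, k) hjk
      linarith
    · have h1 := hmono s(i, k) hik hNik
      have h2 := hmono s(j, k) hjk hNjk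
      have := hx.2 i j k hij hik hjk hnij
      linarith
  have hhalf : HalfIntegral G xh := by
    intro e he
    simp only [hxhdef]
    split_ifs with h1 h2
    · right; right; rfl
    · left; rfl
    · exact hhi e he
  refine ⟨⟨hfeas, hhalf⟩, ?_⟩
  intro hopt
  set S := G.edgeFinset with hS
  set Bf := S.filter (· ∈ Bh) with hBf
  set Nf := S.filter (· ∈ Nh) with hNf
  have hBcoe : (↑Bf : Set (Sym2 V)) = Bh := by
    ext e
    simp only [hBf, Finset.coe_filter, Set.mem_setOf_eq, SimpleGraph.mem_edgeFinset, hS]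
    exact ⟨fun h => h.2, fun h => ⟨((hBmem e).1 h).1, h⟩⟩
  have hNcoe : (↑Nf : Set (Sym2 V)) = Nh := by
    ext e
    simp only [hNf, Finset.coe_filter, Set.mem_setOf_eq, SimpleGraph.mem_edgeFinset, hS]
    exact ⟨fun h => h.2, fun h => ⟨((hNmem e).1 h).1, h⟩⟩
  have hBcard : Bh.ncard = Bf.card := by rw [← hBcoe, Set.ncard_coe_finset]
  have hNcard : Nh.ncard = Nf.card := by rw [← hNcoe, Set.ncard_coe_finset]
  -- compute the difference of sums
  have hsum : ∑ e ∈ S, xh e - ∑ e ∈ S, x e = (Bf.card : ℚ) / 2 - (Nf.card : ℚ) / 2 := by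
    rw [← Finset.sum_sub_distrib]
    have hcongr : ∑ e ∈ S, (xh e - x e)
        = ∑ e ∈ S, (if e ∈ Bh then (1 : ℚ) / 2 else if e ∈ Nh then -(1 / 2) else 0) := by
      apply Finset.sum_congr rfl
      intro e he
      have he' : e ∈ G.edgeSet := SimpleGraph.mem_edgeFinset.1 he
      by_cases hB : e ∈ Bh
      · have hx12 := ((hBmem e).1 hB).2.1
        simp only [hxhdef, if_pos hB, hx12]; norm_num
      by_cases hN : e ∈ Nh
      · have hx12 := ((hNmem e).1 hN).2.1
        simp only [hxhdef, if_neg hB, if_pos hN, hx12]; norm_num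
      · simp only [hxhdef, if_neg hB, if_neg hN, sub_self]
    rw [hcongr]
    rw [← Finset.sum_filter_add_sum_filter_not S (· ∈ Bh)]
    have h1 : ∑ e ∈ S.filter (· ∈ Bh),
        (if e ∈ Bh then (1 : ℚ) / 2 else if e ∈ Nh then -(1 / 2) else 0)
        = (Bf.card : ℚ) / 2 := by
      rw [Finset.sum_congr rfl (fun e he => if_pos (Finset.mem_filter.1 he).2)]
      rw [Finset.sum_const, ← hBf]
      simp [div_eq_mul_inv]
    have h2 : ∑ e ∈ S.filter (fun e => ¬ e ∈ Bh),
        (if e ∈ Bh then (1 : ℚ) / 2 else if e ∈ Nh then -(1 / 2) else 0)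
        = -((Nf.card : ℚ) / 2) := by
      rw [Finset.sum_congr rfl (fun e he => if_neg (Finset.mem_filter.1 he).2)]
      rw [Finset.sum_ite, Finset.sum_const, Finset.sum_const, Finset.filter_filter]
      have : (S.filter fun e => ¬ e ∈ Bh ∧ e ∈ Nh) = Nf := by
        rw [hNf]
        apply Finset.filter_congr
        intro e he
        exact ⟨fun h => h.2, fun h => ⟨Set.disjoint_right.1 hdisj h, h⟩⟩
      rw [this]
      simp [div_eq_mul_inv]
    rw [h1, h2]
    ring
  have hle : ∑ e ∈ S, x e ≤ ∑ e ∈ S, xh e := hopt xh hfeas hhalf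
  have hNB : (Nf.card : ℚ) ≤ (Bf.card : ℚ) := by linarith
  have hNBn : Nh.ncard ≤ Bh.ncard := by
    rw [hBcard, hNcard]; exact_mod_cast hNB
  refine ⟨hNBn, ?_⟩
  have hEun : Eh = Bh ∪ Nh := by
    rw [hEh, hBh, hNh]
    ext e
    simp only [Set.mem_setOf_eq, Set.mem_union]
    tauto
  have hfinB : Bh.Finite := by rw [← hBcoe]; exact Bf.finite_toSet
  have hfinN : Nh.Finite := by rw [← hNcoe]; exact Nf.finite_toSet
  have : Eh.ncard = Bh.ncard + Nh.ncard := by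
    rw [hEun, Set.ncard_union_eq hdisj hfinB hfinN]
  omega

end CD
end

section
/- If x is a feasible solution of the STC LP for G, then E_W = { e ∈ E : x_e ≥ 1/2 } is an STC labeling of G with |E_W| ≤ 2·Σ_{e ∈ E} x_e. -/
open scoped Classical

namespace CD

variable {V : Type*}

variable [Fintype V] [DecidableEq V]

theorem statement_18 (G : SimpleGraph V) (x : Sym2 V → ℚ) (hx : LPFeasible G x) :
    IsSTCLabeling G {e | e ∈ G.edgeSet ∧ 1 / 2 ≤ x e} ∧
    ({e | e ∈ G.edgeSet ∧ 1 / 2 ≤ x e}.ncard : ℚ) ≤ 2 * ∑ e ∈ G.edgeFinset, x e := by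
  obtain ⟨hnn, hcon⟩ := hx
  constructor
  · constructor
    · intro e he; exact he.1
    · intro i j k hij hik hjk hnadj
      have h := hcon i j k hij hik hjk hnadj
      by_cases h1 : 1 / 2 ≤ x s(i, k)
      · exact Or.inl ⟨(SimpleGraph.mem_edgeSet G).mpr hik, h1⟩
      · refine Or.inr ⟨(SimpleGraph.mem_edgeSet G).mpr hjk, ?_⟩
        linarith
  · have hset : {e | e ∈ G.edgeSet ∧ 1 / 2 ≤ x e}
        = ↑(G.edgeFinset.filter (fun e => 1 / 2 ≤ x e)) := by
      ext e
      simp [SimpleGraph.mem_edgeFinset]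
    rw [hset, Set.ncard_coe_finset]
    have h1 : ((G.edgeFinset.filter (fun e => 1 / 2 ≤ x e)).card : ℚ)
        ≤ ∑ e ∈ G.edgeFinset.filter (fun e => 1 / 2 ≤ x e), 2 * x e := by
      rw [Finset.card_eq_sum_ones]
      push_cast
      apply Finset.sum_le_sum
      intro e he
      have := (Finset.mem_filter.mp he).2
      linarith
    have h2 : ∑ e ∈ G.edgeFinset.filter (fun e => 1 / 2 ≤ x e), 2 * x e
        ≤ ∑ e ∈ G.edgeFinset, 2 * x e := by
      apply Finset.sum_le_sum_of_subset_of_nonneg (Finset.filter_subset _ _)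
      intro e he _
      have := hnn e (SimpleGraph.mem_edgeFinset.mp he)
      linarith
    rw [Finset.mul_sum] at *
    linarith

end CD
end
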